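/- arXiv:2406.16879 — 2 statements merged into one kernel-verified Lean document; each statement's English description precedes it below -/
import Mathlib

section
/- Let I = {i_1 < ... < i_k} and J = {j_1 < ... < j_k} be two k-element subsets of [n] viewed as one-column tableaux. If I and J are crossing (i.e., not noncrossing), then I and J are not weakly separated. -/
open Finset

/-- `allLT I J` means `max I < min J` (vacuously true if either set is empty). -/
def allLT (I J : Finset ℕ) : Prop := ∀ i ∈ I, ∀ j ∈ J, i < j

/-- `I` and `J` are weakly separated. -/
def WeaklySeparated (I J : Finset ℕ) : Prop :=
  (∃ I1 I2 : Finset ℕ, Disjoint I1 I2 ∧ I1 ∪ I2 = I \ J ∧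
      allLT I1 (J \ I) ∧ allLT (J \ I) I2) ∨
  (∃ J1 J2 : Finset ℕ, Disjoint J1 J2 ∧ J1 ∪ J2 = J \ I ∧
      allLT J1 (I \ J) ∧ allLT (I \ J) J2)

/-- the set `{i_a, i_{a+1}, ..., i_b}` of entries of `I` in (1-indexed) positions `a` to `b`. -/
def posSlice (I : Finset ℕ) (a b : ℕ) : Finset ℕ :=
  I.filter fun x => a ≤ (I.filter (· ≤ x)).card ∧ (I.filter (· ≤ x)).card ≤ b

/-- the pair of `k`-subsets `I`, `J` is noncrossing. -/
def Noncrossing (k : ℕ) (I J : Finset ℕ) : Prop :=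
  ∀ a b : ℕ, 1 ≤ a → a < b → b ≤ k →
    WeaklySeparated (posSlice I a b) (posSlice J a b) ∨
    posSlice I (a + 1) (b - 1) ≠ posSlice J (a + 1) (b - 1)

/-- the `a`-th smallest entry of `I` (1-indexed). -/
def nth (I : Finset ℕ) (a : ℕ) : ℕ := (I.sort (· ≤ ·)).getD (a - 1) 0

/-- `T` is a rectangular semistandard Young tableau with entries in `[n]`. -/
def IsSSYT {k m : ℕ} (n : ℕ) (T : Fin k → Fin m → ℕ) : Prop :=
  (∀ i j, T i j ∈ Finset.Icc 1 n) ∧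
  (∀ i (j j' : Fin m), j ≤ j' → T i j ≤ T i j') ∧
  (∀ (i i' : Fin k) j, i < i' → T i j < T i' j)

/-!
Because the middle slices `I[a+1, b-1]` and `J[a+1, b-1]` agree, the slices `I[a, b]` and
`J[a, b]` differ at most in their end entries, so their failure to be weakly separated forces
an interleaving `i_a < j_a < i_b < j_b` of those entries (or the mirror image). Then
`j_a ∉ I` and `i_b ∉ J`, and comparing ranks yields an element of `I \ J` below `j_a` and an
element of `J \ I` above `i_b`; these witness that `I` and `J` are not weakly separated.
-/

/-- `rank I i_r = r`: the 1-indexed position used by `posSlice`. -/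
def rank (I : Finset ℕ) (x : ℕ) : ℕ := #(I.filter (· ≤ x))

def Straddled (A B : Finset ℕ) : Prop :=
  ∃ x ∈ A \ B, ∃ y ∈ B \ A, ∃ y' ∈ B \ A, y < x ∧ x < y'

section Rank

variable {I J : Finset ℕ} {x y : ℕ}

lemma rank_mono (h : x ≤ y) : rank I x ≤ rank I y :=
  card_le_card (monotone_filter_right I fun _ _ hz => hz.trans h)

lemma rank_lt_rank (hy : y ∈ I) (h : x < y) : rank I x < rank I y := by
  refine card_lt_card ⟨monotone_filter_right I fun _ _ hz => hz.trans h.le, fun hsub => ?_⟩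
  have := (mem_filter.1 (hsub (mem_filter.2 ⟨hy, le_rfl⟩))).2
  omega

lemma eq_of_rank_eq (hx : x ∈ I) (hy : y ∈ I) (h : rank I x = rank I y) : x = y := by
  rcases lt_trichotomy x y with hxy | hxy | hxy
  · exact absurd h (rank_lt_rank hy hxy).ne
  · exact hxy
  · exact absurd h (rank_lt_rank hx hxy).ne'

lemma rank_add_card_filter_lt (I : Finset ℕ) (x : ℕ) :
    rank I x + #(I.filter (x < ·)) = #I := by
  simp_rw [rank, ← not_le]
  exact card_filter_add_card_filter_not _

lemma exists_mem_sdiff_le_of_rank_lt (h : rank J x < rank I x) : ∃ z ∈ I \ J, z ≤ x := by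
  obtain ⟨z, hzI, hzJ⟩ := exists_mem_notMem_of_card_lt_card h
  rw [mem_filter] at hzI hzJ
  exact ⟨z, mem_sdiff.2 ⟨hzI.1, fun hz => hzJ ⟨hz, hzI.2⟩⟩, hzI.2⟩

lemma exists_mem_sdiff_gt_of_rank_lt (hcard : #I = #J) (h : rank J x < rank I x) :
    ∃ z ∈ J \ I, x < z := by
  have hI := rank_add_card_filter_lt I x
  have hJ := rank_add_card_filter_lt J x
  obtain ⟨z, hzJ, hzI⟩ := exists_mem_notMem_of_card_lt_card (s := I.filter (x < ·))
    (t := J.filter (x < ·)) (by omega)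
  rw [mem_filter] at hzI hzJ
  exact ⟨z, mem_sdiff.2 ⟨hzJ.1, fun hz => hzI ⟨hz, hzJ.2⟩⟩, hzJ.2⟩

lemma mem_posSlice {a b : ℕ} : x ∈ posSlice I a b ↔ x ∈ I ∧ a ≤ rank I x ∧ rank I x ≤ b :=
  mem_filter

lemma posSlice_subset (a b : ℕ) : posSlice I a b ⊆ I :=
  filter_subset _ _

end Rank

section WeaklySeparated

variable {A B : Finset ℕ}

lemma weaklySeparated_comm : WeaklySeparated A B ↔ WeaklySeparated B A :=
  Or.comm

lemma exists_split_iff_not_straddled :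
    (∃ A1 A2 : Finset ℕ, Disjoint A1 A2 ∧ A1 ∪ A2 = A \ B ∧
      allLT A1 (B \ A) ∧ allLT (B \ A) A2) ↔ ¬ Straddled A B := by
  constructor
  · rintro ⟨A1, A2, -, hunion, h1, h2⟩ ⟨x, hx, y, hy, y', hy', hyx, hxy'⟩
    rcases mem_union.1 (hunion ▸ hx : x ∈ A1 ∪ A2) with hx | hx
    · exact (h1 x hx y hy).asymm hyx
    · exact (h2 y' hy' x hx).asymm hxy'
  · intro hS
    refine ⟨(A \ B).filter (fun x => ∀ y ∈ B \ A, x < y),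
      (A \ B).filter (fun x => ¬ ∀ y ∈ B \ A, x < y), disjoint_filter_filter_not _ _ _,
      filter_union_filter_not_eq _ _, fun x hx y hy => (mem_filter.1 hx).2 y hy, ?_⟩
    intro y hy x hx
    obtain ⟨hxAB, hnot⟩ := mem_filter.1 hx
    push Not at hnot
    obtain ⟨y₀, hy₀, hy₀x⟩ := hnot
    have hne : ∀ z ∈ B \ A, z ≠ x := fun z hz hzx =>
      (mem_sdiff.1 hxAB).2 (hzx ▸ (mem_sdiff.1 hz).1)
    by_contra hyx
    exact hS ⟨x, hxAB, y₀, hy₀, y, hy, lt_of_le_of_ne hy₀x (hne y₀ hy₀),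
      lt_of_le_of_ne (not_lt.1 hyx) (hne y hy).symm⟩

lemma not_weaklySeparated_iff : ¬ WeaklySeparated A B ↔ Straddled A B ∧ Straddled B A := by
  rw [WeaklySeparated, exists_split_iff_not_straddled, exists_split_iff_not_straddled]
  tauto

lemma exists_interleaving_of_not_weaklySeparated (hA : #(A \ B) ≤ 2) (hB : #(B \ A) ≤ 2)
    (h : ¬ WeaklySeparated A B) :
    ∃ u ∈ A \ B, ∃ v ∈ B \ A, ∃ u' ∈ A \ B, ∃ v' ∈ B \ A,
      (u < v ∧ v < u' ∧ u' < v') ∨ (v < u ∧ u < v' ∧ v' < u') := by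
  obtain ⟨⟨x, hx, y, hy, y', hy', hyx, hxy'⟩, ⟨z, hz, w, hw, w', hw', hwz, hzw'⟩⟩ :=
    not_weaklySeparated_iff.1 h
  have hxw : x = w ∨ x = w' := by
    by_contra! hne
    exact hA.not_gt (two_lt_card.2 ⟨x, hx, w, hw, w', hw', hne.1, hne.2, by omega⟩)
  have hzy : z = y ∨ z = y' := by
    by_contra! hne
    exact hB.not_gt (two_lt_card.2 ⟨z, hz, y, hy, y', hy', hne.1, hne.2, by omega⟩)
  refine ⟨w, hw, y, hy, w', hw', y', hy', ?_⟩
  omega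

end WeaklySeparated

section Slices

variable {I J : Finset ℕ} {a b : ℕ}

lemma rank_eq_or_eq_of_mem_sdiff_posSlice (hab : a < b)
    (hmid : posSlice I (a + 1) (b - 1) = posSlice J (a + 1) (b - 1)) {x : ℕ}
    (hx : x ∈ posSlice I a b \ posSlice J a b) : rank I x = a ∨ rank I x = b := by
  obtain ⟨hxI, hxJ⟩ := mem_sdiff.1 hx
  obtain ⟨hxI, hax, hxb⟩ := mem_posSlice.1 hxI
  by_contra! hne
  have hxmid : x ∈ posSlice J (a + 1) (b - 1) := hmid ▸ mem_posSlice.2 ⟨hxI, by omega, by omega⟩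
  obtain ⟨hxJ', hax', hxb'⟩ := mem_posSlice.1 hxmid
  exact hxJ (mem_posSlice.2 ⟨hxJ', by omega, by omega⟩)

lemma card_sdiff_posSlice_le_two (hab : a < b)
    (hmid : posSlice I (a + 1) (b - 1) = posSlice J (a + 1) (b - 1)) :
    #(posSlice I a b \ posSlice J a b) ≤ 2 := by
  have hsub : posSlice I a b \ posSlice J a b ⊆ I := sdiff_subset.trans (posSlice_subset a b)
  calc #(posSlice I a b \ posSlice J a b) ≤ #({a, b} : Finset ℕ) :=
        card_le_card_of_injOn (rank I)
          (fun x hx => by simpa using rank_eq_or_eq_of_mem_sdiff_posSlice hab hmid hx)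
          (fun x hx y hy => eq_of_rank_eq (hsub hx) (hsub hy))
    _ ≤ 2 := card_le_two

lemma not_weaklySeparated_of_interleaving (hcard : #I = #J) (hab : a < b)
    (hmid : posSlice I (a + 1) (b - 1) = posSlice J (a + 1) (b - 1)) {u v u' v' : ℕ}
    (hu : u ∈ posSlice I a b \ posSlice J a b) (hv : v ∈ posSlice J a b \ posSlice I a b)
    (hu' : u' ∈ posSlice I a b \ posSlice J a b) (hv' : v' ∈ posSlice J a b \ posSlice I a b)
    (huv : u < v) (hvu' : v < u') (hu'v' : u' < v') :
    ¬ WeaklySeparated I J := by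
  have hsubI : posSlice I a b \ posSlice J a b ⊆ I := sdiff_subset.trans (posSlice_subset a b)
  have hsubJ : posSlice J a b \ posSlice I a b ⊆ J := sdiff_subset.trans (posSlice_subset a b)
  have hrI : rank I u = a ∧ rank I u' = b := by
    have := rank_lt_rank (hsubI hu') (huv.trans hvu')
    have := rank_eq_or_eq_of_mem_sdiff_posSlice hab hmid hu
    have := rank_eq_or_eq_of_mem_sdiff_posSlice hab hmid hu'
    omega
  have hrJ : rank J v = a ∧ rank J v' = b := by
    have := rank_lt_rank (hsubJ hv') (hvu'.trans hu'v')
    have := rank_eq_or_eq_of_mem_sdiff_posSlice hab hmid.symm hv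
    have := rank_eq_or_eq_of_mem_sdiff_posSlice hab hmid.symm hv'
    omega
  have hvI : v ∉ I := fun hvI => (mem_sdiff.1 hv).2 <| mem_posSlice.2
    ⟨hvI, hrI.1 ▸ rank_mono huv.le, hrI.2 ▸ rank_mono hvu'.le⟩
  have hu'J : u' ∉ J := fun hu'J => (mem_sdiff.1 hu').2 <| mem_posSlice.2
    ⟨hu'J, hrJ.1 ▸ rank_mono hvu'.le, hrJ.2 ▸ rank_mono hu'v'.le⟩
  obtain ⟨x, hx, hxu⟩ := exists_mem_sdiff_le_of_rank_lt (I := I) (J := J) (x := u)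
    (by have := rank_lt_rank (hsubJ hv) huv; omega)
  obtain ⟨y, hy, hu'y⟩ := exists_mem_sdiff_gt_of_rank_lt (x := u') hcard
    (by have := rank_lt_rank (hsubJ hv') hu'v'; omega)
  have hvJI : v ∈ J \ I := mem_sdiff.2 ⟨hsubJ hv, hvI⟩
  have hu'IJ : u' ∈ I \ J := mem_sdiff.2 ⟨hsubI hu', hu'J⟩
  exact not_weaklySeparated_iff.2
    ⟨⟨u', hu'IJ, v, hvJI, y, hy, hvu', hu'y⟩, ⟨v, hvJI, x, hx, u', hu'IJ, hxu.trans_lt huv, hvu'⟩⟩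

end Slices

theorem crossing_implies_not_weakly_separated_general
    (k : ℕ) (I J : Finset ℕ)
    (hIc : I.card = k) (hJc : J.card = k)
    (hcross : ¬ Noncrossing k I J) :
    ¬ WeaklySeparated I J := by
  simp only [Noncrossing, not_forall, not_or, not_not] at hcross
  obtain ⟨a, b, -, hab, -, hslice, hmid⟩ := hcross
  obtain ⟨u, hu, v, hv, u', hu', v', hv', ⟨huv, hvu', hu'v'⟩ | ⟨hvu, huv', hv'u'⟩⟩ :=
    exists_interleaving_of_not_weaklySeparated (card_sdiff_posSlice_le_two hab hmid)
      (card_sdiff_posSlice_le_two hab hmid.symm) hslice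
  · exact not_weaklySeparated_of_interleaving (hIc.trans hJc.symm) hab hmid hu hv hu' hv'
      huv hvu' hu'v'
  · rw [weaklySeparated_comm]
    exact not_weaklySeparated_of_interleaving (hJc.trans hIc.symm) hab hmid.symm hv hu hv' hu'
      hvu huv' hv'u'

/-- If two `k`-subsets are crossing then they are not weakly separated. -/
theorem crossing_implies_not_weakly_separated
    (n k : ℕ) (I J : Finset ℕ) (hI : I ⊆ Finset.Icc 1 n) (hJ : J ⊆ Finset.Icc 1 n)
    (hIc : I.card = k) (hJc : J.card = k)
    (hcross : ¬ Noncrossing k I J) :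
    ¬ WeaklySeparated I J :=
  crossing_implies_not_weakly_separated_general k I J hIc hJc hcross
end

section
/- For n ≥ 2k ≥ 2, the number of unordered pairs (I,J) of k-element subsets of [n] (allowing I = J) that are weakly separated equals b_{k,n} = C(n,k) + Σ_{j=1}^{k} j · n!/((k-j)! (2j)! (n-k-j)!). -/
open Finset

/-! Weak separation of `I` and `J` only depends on `A = I \ J` and `B = J \ I`: it says that `A`
or `B` is an interval of `S = A ∪ B`, i.e. that `A` is an arc of `S` read cyclically. So an
ordered weakly separated pair with `#(I \ J) = j > 0` amounts to a `2j`-set `S`, a `(k - j)`-set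
`I ∩ J` disjoint from it, and one of the `2j` arcs of length `j` of `S`: the `j + 1` intervals
`[t, t + j)` of positions and the `j - 1` complements of intervals lying strictly inside.
Unordered pairs are then counted by halving off the diagonal. -/

section Intervals

variable {α β : Type*} [LinearOrder α] [LinearOrder β]

def IsIntervalIn (S A : Finset α) : Prop :=
  ∀ x ∈ A, ∀ z ∈ A, ∀ y ∈ S, x ≤ y → y ≤ z → y ∈ A

instance (S A : Finset α) : Decidable (IsIntervalIn S A) := by
  unfold IsIntervalIn; infer_instance

def cyclicIntervals (S : Finset α) (j : ℕ) : Finset (Finset α) :=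
  (S.powersetCard j).filter fun A => IsIntervalIn S A ∨ IsIntervalIn S (S \ A)

theorem isIntervalIn_map (e : α ↪o β) {S A : Finset α} :
    IsIntervalIn (S.map e.toEmbedding) (A.map e.toEmbedding) ↔ IsIntervalIn S A := by
  simp [IsIntervalIn]

theorem cyclicIntervals_map (e : α ↪o β) (S : Finset α) (j : ℕ) :
    cyclicIntervals (S.map e.toEmbedding) j =
      (cyclicIntervals S j).map (mapEmbedding e.toEmbedding).toEmbedding := by
  rw [cyclicIntervals, powersetCard_map, filter_map, cyclicIntervals]
  congr 1
  refine filter_congr fun A _ => ?_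
  simp only [Function.comp_apply, RelEmbedding.coe_toEmbedding, mapEmbedding_apply,
    ← Finset.map_sdiff, isIntervalIn_map]

theorem card_cyclicIntervals_congr {S : Finset α} {T : Finset β} (h : #S = #T) (j : ℕ) :
    #(cyclicIntervals S j) = #(cyclicIntervals T j) := by
  rw [← S.map_orderEmbOfFin_univ rfl, ← T.map_orderEmbOfFin_univ h.symm, cyclicIntervals_map,
    cyclicIntervals_map, card_map, card_map]

theorem isIntervalIn_empty (S : Finset α) : IsIntervalIn S ∅ := by
  simp [IsIntervalIn]

theorem card_cyclicIntervals_zero (S : Finset α) : #(cyclicIntervals S 0) = 1 := by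
  rw [cyclicIntervals, powersetCard_zero, filter_singleton,
    if_pos (Or.inl (isIntervalIn_empty S)), card_singleton]

theorem isIntervalIn_Ico (S : Finset ℕ) (a b : ℕ) : IsIntervalIn S (Ico a b) := by
  intro x hx z hz y _ hxy hyz
  simp only [mem_Ico] at hx hz ⊢
  omega

theorem IsIntervalIn.exists_eq_Ico {m : ℕ} {A : Finset ℕ} (h : IsIntervalIn (range m) A)
    (hA : A ⊆ range m) (hne : A.Nonempty) : ∃ t, t + #A ≤ m ∧ A = Ico t (t + #A) := by
  have hmax := mem_range.mp (hA (A.max'_mem hne))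
  have hIcc : A = Icc (A.min' hne) (A.max' hne) := by
    ext y
    simp only [mem_Icc]
    refine ⟨fun hy => ⟨A.min'_le y hy, A.le_max' y hy⟩, fun ⟨h1, h2⟩ => ?_⟩
    exact h _ (A.min'_mem hne) _ (A.max'_mem hne) y (mem_range.mpr (by omega)) h1 h2
  have hlen : #A = A.max' hne + 1 - A.min' hne := by rw [← Nat.card_Icc, ← hIcc]
  have hle := A.min'_le _ (A.max'_mem hne)
  refine ⟨A.min' hne, by omega, hIcc.trans ?_⟩
  ext y
  simp only [mem_Icc, mem_Ico]
  omega

theorem not_isIntervalIn_range_sdiff_Ico {m j t : ℕ} (ht : 0 < t) (htj : t < j) (hjm : j < m) :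
    ¬ IsIntervalIn (range m) (range m \ Ico t (t + (m - j))) := by
  intro h
  have := h 0 (by simp; omega) (m - 1) (by simp; omega) t (by simp; omega) (by omega) (by omega)
  simp only [mem_sdiff, mem_range, mem_Ico] at this
  omega

theorem Ico_subset_range {a b m : ℕ} (h : b ≤ m) : Ico a b ⊆ range m := fun y hy => by
  simp only [mem_Ico, mem_range] at hy ⊢
  omega

theorem cyclicIntervals_range {m j : ℕ} (hj : 0 < j) (hjm : j < m) :
    cyclicIntervals (range m) j =
      (range (m - j + 1)).image (fun t => Ico t (t + j)) ∪
        (Ioo 0 j).image (fun t => range m \ Ico t (t + (m - j))) := by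
  ext A
  simp only [cyclicIntervals, mem_filter, mem_powersetCard, mem_union, mem_image, mem_range,
    mem_Ioo]
  constructor
  · rintro ⟨⟨hA, hcard⟩, hint | hint⟩
    · obtain ⟨t, ht, hAt⟩ := hint.exists_eq_Ico hA (card_pos.mp (by omega))
      rw [hcard] at ht hAt
      exact Or.inl ⟨t, by omega, hAt.symm⟩
    · have hcard' : #(range m \ A) = m - j := by rw [card_sdiff_of_subset hA, card_range, hcard]
      obtain ⟨t, ht, hAt⟩ := hint.exists_eq_Ico sdiff_subset (card_pos.mp (by omega))
      rw [hcard'] at ht hAt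
      obtain rfl : A = range m \ Ico t (t + (m - j)) := by
        rw [← hAt, Finset.sdiff_sdiff_eq_self hA]
      rcases (by omega : t = 0 ∨ t = j ∨ (0 < t ∧ t < j)) with rfl | rfl | ht'
      · refine Or.inl ⟨m - j, by omega, ?_⟩
        ext y; simp only [mem_Ico, mem_sdiff, mem_range]; omega
      · refine Or.inl ⟨0, by omega, ?_⟩
        ext y; simp only [mem_Ico, mem_sdiff, mem_range]; omega
      · exact Or.inr ⟨t, ht', rfl⟩
  · rintro (⟨t, ht, rfl⟩ | ⟨t, ht, rfl⟩)
    · exact ⟨⟨Ico_subset_range (by omega), by simp⟩, Or.inl (isIntervalIn_Ico _ _ _)⟩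
    · refine ⟨⟨sdiff_subset, ?_⟩, Or.inr ?_⟩
      · rw [card_sdiff_of_subset (Ico_subset_range (by omega)), card_range, Nat.card_Ico]
        omega
      · rw [Finset.sdiff_sdiff_eq_self (Ico_subset_range (by omega))]
        exact isIntervalIn_Ico _ _ _

theorem Ico_add_injective {l : ℕ} (hl : 0 < l) : Function.Injective fun t => Ico t (t + l) := by
  intro s t (hst : Ico s (s + l) = Ico t (t + l))
  have hs : s ∈ Ico t (t + l) := hst ▸ left_mem_Ico.mpr (by omega)
  have ht : t ∈ Ico s (s + l) := hst ▸ left_mem_Ico.mpr (by omega)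
  simp only [mem_Ico] at hs ht
  omega

theorem card_cyclicIntervals_range {m j : ℕ} (hj : 0 < j) (hjm : j < m) :
    #(cyclicIntervals (range m) j) = m := by
  rw [cyclicIntervals_range hj hjm, card_union_of_disjoint, card_image_of_injective _
    (Ico_add_injective hj), card_image_of_injOn]
  · simp only [card_range, Nat.card_Ioo]
    omega
  · intro s hs t ht hst
    simp only [coe_Ioo, Set.mem_Ioo] at hs ht
    have := congrArg (range m \ ·) hst
    simp only [Finset.sdiff_sdiff_eq_self (Ico_subset_range (by omega : s + (m - j) ≤ m)),
      Finset.sdiff_sdiff_eq_self (Ico_subset_range (by omega : t + (m - j) ≤ m))] at this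
    exact Ico_add_injective (by omega) this
  · rw [disjoint_left]
    simp only [mem_image, mem_Ioo, not_exists, not_and]
    rintro _ ⟨s, -, rfl⟩ t ht hts
    exact not_isIntervalIn_range_sdiff_Ico ht.1 ht.2 hjm (hts ▸ isIntervalIn_Ico _ _ _)

theorem card_cyclicIntervals {S : Finset α} {j : ℕ} (hj : 0 < j) (hjS : j < #S) :
    #(cyclicIntervals S j) = #S := by
  rw [card_cyclicIntervals_congr (card_range #S).symm, card_cyclicIntervals_range hj hjS]

end Intervals

theorem split_iff_isIntervalIn {A B : Finset ℕ} (hAB : Disjoint A B) :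
    (∃ A1 A2 : Finset ℕ, Disjoint A1 A2 ∧ A1 ∪ A2 = A ∧ allLT A1 B ∧ allLT B A2) ↔
      IsIntervalIn (A ∪ B) B := by
  constructor
  · rintro ⟨A1, A2, -, rfl, h1, h2⟩ x hx z hz y hy hxy hyz
    by_contra hyB
    rcases mem_union.mp ((mem_union.mp hy).resolve_right hyB) with hy1 | hy2
    · exact absurd (h1 y hy1 x hx) hxy.not_gt
    · exact absurd (h2 z hz y hy2) hyz.not_gt
  · intro hB
    rcases B.eq_empty_or_nonempty with rfl | hne
    · exact ⟨A, ∅, disjoint_empty_right A, union_empty A, by simp [allLT], by simp [allLT]⟩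
    set b := B.min' hne
    have hAb : ∀ a ∈ A, a ≠ b := fun a ha hab =>
      disjoint_left.mp hAB ha (hab ▸ B.min'_mem hne)
    refine ⟨A.filter (· < b), A.filter (b < ·), disjoint_filter.mpr fun a _ h => h.not_gt, ?_,
      fun a ha c hc => (mem_filter.mp ha).2.trans_le (B.min'_le c hc), fun c hc a ha => ?_⟩
    · ext a
      simp only [mem_union, mem_filter]
      constructor
      · rintro (⟨ha, -⟩ | ⟨ha, -⟩) <;> exact ha
      · exact fun ha => ((hAb a ha).lt_or_gt).imp (⟨ha, ·⟩) (⟨ha, ·⟩)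
    · obtain ⟨haA, hba⟩ := mem_filter.mp ha
      by_contra! hac
      exact disjoint_left.mp hAB haA
        (hB b (B.min'_mem hne) c hc a (mem_union_left B haA) hba.le hac)

theorem weaklySeparated_iff {I J : Finset ℕ} :
    WeaklySeparated I J ↔
      IsIntervalIn (I \ J ∪ J \ I) (I \ J) ∨ IsIntervalIn (I \ J ∪ J \ I) (J \ I) := by
  rw [WeaklySeparated, split_iff_isIntervalIn disjoint_sdiff_sdiff,
    split_iff_isIntervalIn disjoint_sdiff_sdiff.symm, union_comm (J \ I), or_comm]

instance : DecidableRel WeaklySeparated := fun _ _ => decidable_of_iff _ weaklySeparated_iff.symm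

theorem WeaklySeparated.refl (I : Finset ℕ) : WeaklySeparated I I :=
  weaklySeparated_iff.mpr (Or.inl (by simpa using isIntervalIn_empty ∅))

theorem WeaklySeparated.symm {I J : Finset ℕ} (h : WeaklySeparated I J) : WeaklySeparated J I :=
  Or.symm h

section Sym2Count

variable {α : Type*} [DecidableEq α]

theorem filter_sym2_eq_image (s : Finset α) (r : α → α → Prop) [DecidableRel r]
    [DecidablePred fun z : Sym2 α => ∃ a b, z = s(a, b) ∧ r a b] :
    s.sym2.filter (fun z => ∃ a b, z = s(a, b) ∧ r a b) =
      ((s ×ˢ s).filter fun p => r p.1 p.2).image fun p => s(p.1, p.2) := by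
  ext z
  simp only [mem_filter, mem_image, mem_product, Prod.exists]
  constructor
  · rintro ⟨hz, a, b, rfl, hab⟩
    exact ⟨a, b, ⟨mk_mem_sym2_iff.mp hz, hab⟩, rfl⟩
  · rintro ⟨a, b, ⟨hs, hab⟩, rfl⟩
    exact ⟨mk_mem_sym2_iff.mpr hs, a, b, rfl, hab⟩

theorem two_mul_card_image_sym2 {t : Finset (α × α)} (ht : ∀ p ∈ t, p.swap ∈ t) :
    2 * #(t.image fun p => s(p.1, p.2)) = #t + #(t.filter fun p => p.1 = p.2) := by
  rw [card_eq_sum_card_image (fun p => s(p.1, p.2)) t,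
    card_eq_sum_card_fiberwise (f := fun p => s(p.1, p.2)) (t := t.image fun p => s(p.1, p.2))
      (fun p hp => mem_image_of_mem _ (mem_filter.mp hp).1),
    ← sum_add_distrib, mul_comm, ← smul_eq_mul, ← sum_const]
  refine sum_congr rfl ?_
  simp only [mem_image]
  rintro _ ⟨p, hp, rfl⟩
  have hfib : t.filter (fun q => s(q.1, q.2) = s(p.1, p.2)) = {p, p.swap} := by
    ext q
    simp only [mem_filter, mem_insert, mem_singleton, Sym2.mk_eq_mk_iff]
    refine ⟨And.right, fun h => ⟨?_, h⟩⟩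
    rcases h with rfl | rfl
    exacts [hp, ht p hp]
  rw [filter_comm, hfib]
  by_cases hd : p.1 = p.2
  · have hswap : p.swap = p := Prod.ext hd.symm hd
    rw [hswap, pair_eq_singleton, filter_singleton, if_pos hd, card_singleton]
  · have hswap : p ≠ p.swap := fun h => hd (congrArg Prod.fst h)
    rw [card_pair hswap, filter_insert, filter_singleton, if_neg hd, Prod.fst_swap, Prod.snd_swap,
      if_neg (Ne.symm hd), card_empty]

end Sym2Count

theorem union_sdiff_union_eq {α : Type*} [DecidableEq α] {C A B : Finset α}
    (hCA : Disjoint C A) (hAB : Disjoint A B) : (C ∪ A) \ (C ∪ B) = A := by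
  rw [disjoint_left] at hCA hAB
  grind

def weaklySeparatedPairs (G : Finset ℕ) (k : ℕ) : Finset (Finset ℕ × Finset ℕ) :=
  (G.powersetCard k ×ˢ G.powersetCard k).filter fun p => WeaklySeparated p.1 p.2

@[simp]
theorem mem_weaklySeparatedPairs {G : Finset ℕ} {k : ℕ} {p : Finset ℕ × Finset ℕ} :
    p ∈ weaklySeparatedPairs G k ↔
      ((p.1 ⊆ G ∧ #p.1 = k) ∧ p.2 ⊆ G ∧ #p.2 = k) ∧ WeaklySeparated p.1 p.2 := by
  simp [weaklySeparatedPairs]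

theorem weaklySeparated_union_union_iff {C S A : Finset ℕ} (hCS : Disjoint C S) (hAS : A ⊆ S) :
    WeaklySeparated (C ∪ A) (C ∪ (S \ A)) ↔ IsIntervalIn S A ∨ IsIntervalIn S (S \ A) := by
  rw [weaklySeparated_iff, union_sdiff_union_eq (hCS.mono_right hAS) disjoint_sdiff,
    union_sdiff_union_eq (hCS.mono_right sdiff_subset) sdiff_disjoint, union_sdiff_of_subset hAS]

theorem card_weaklySeparatedPairs_sdiff_eq (G : Finset ℕ) {k j : ℕ} (hjk : j ≤ k) :
    #((weaklySeparatedPairs G k).filter fun p => #(p.1 \ p.2) = j) =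
      ∑ S ∈ G.powersetCard (2 * j), #((G \ S).powersetCard (k - j)) * #(cyclicIntervals S j) := by
  simp_rw [← card_product]
  rw [← card_sigma]
  refine card_nbij' (fun p => ⟨p.1 \ p.2 ∪ p.2 \ p.1, (p.1 ∩ p.2, p.1 \ p.2)⟩)
    (fun x => (x.2.1 ∪ x.2.2, x.2.1 ∪ (x.1 \ x.2.2))) ?_ ?_ ?_ ?_
  · rintro ⟨I, J⟩ h
    simp only [coe_filter, Set.mem_ofPred_eq, mem_weaklySeparatedPairs] at h
    obtain ⟨⟨⟨⟨hIG, hI⟩, hJG, hJ⟩, hws⟩, hj⟩ := h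
    have hji : #(J \ I) = j := by rw [← card_sdiff_eq_card_sdiff_iff.mpr (hI.trans hJ.symm), hj]
    have hsdiff : (I \ J ∪ J \ I) \ (I \ J) = J \ I := union_sdiff_cancel_left disjoint_sdiff_sdiff
    simp only [coe_sigma, Set.mem_sigma_iff, mem_coe, mem_product, mem_powersetCard]
    refine ⟨⟨union_subset (sdiff_subset.trans hIG) (sdiff_subset.trans hJG), ?_⟩, ⟨?_, ?_⟩,
      mem_filter.mpr ⟨mem_powersetCard.mpr ⟨subset_union_left, hj⟩, ?_⟩⟩
    · rw [card_union_of_disjoint disjoint_sdiff_sdiff, hj, hji, two_mul]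
    · refine subset_sdiff.mpr ⟨inter_subset_left.trans hIG, ?_⟩
      rw [disjoint_left]
      grind
    · have := card_sdiff_add_card_inter I J
      omega
    · rw [hsdiff]
      exact weaklySeparated_iff.mp hws
  · rintro ⟨S, C, A⟩ h
    simp only [coe_sigma, Set.mem_sigma_iff, mem_coe, mem_product, mem_powersetCard,
      cyclicIntervals, mem_filter, subset_sdiff] at h
    obtain ⟨⟨hSG, hS⟩, ⟨⟨hCG, hCS⟩, hC⟩, ⟨hAS, hA⟩, hint⟩ := h
    have hSA : #(S \ A) = j := by rw [card_sdiff_of_subset hAS]; omega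
    simp only [coe_filter, Set.mem_ofPred_eq, mem_weaklySeparatedPairs,
      weaklySeparated_union_union_iff hCS hAS,
      union_sdiff_union_eq (hCS.mono_right hAS) disjoint_sdiff]
    refine ⟨⟨⟨⟨union_subset hCG (hAS.trans hSG), ?_⟩, union_subset hCG (sdiff_subset.trans hSG),
      ?_⟩, hint⟩, hA⟩
    · rw [card_union_of_disjoint (hCS.mono_right hAS)]; omega
    · rw [card_union_of_disjoint (hCS.mono_right sdiff_subset)]; omega
  · rintro ⟨I, J⟩ -
    simp only [Prod.mk.injEq]
    constructor <;> grind
  · rintro ⟨S, C, A⟩ h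
    simp only [coe_sigma, Set.mem_sigma_iff, mem_coe, mem_product, mem_powersetCard,
      cyclicIntervals, mem_filter, subset_sdiff] at h
    obtain ⟨-, ⟨⟨-, hCS⟩, -⟩, ⟨hAS, -⟩, -⟩ := h
    simp only [union_sdiff_union_eq (hCS.mono_right hAS) disjoint_sdiff,
      union_sdiff_union_eq (hCS.mono_right sdiff_subset) sdiff_disjoint,
      union_sdiff_of_subset hAS, ← union_inter_distrib_left, inter_sdiff_self, union_empty]

theorem card_weaklySeparatedPairs_sdiff_eq_zero (G : Finset ℕ) (k : ℕ) :
    #((weaklySeparatedPairs G k).filter fun p => #(p.1 \ p.2) = 0) = (#G).choose k := by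
  rw [card_weaklySeparatedPairs_sdiff_eq G k.zero_le]
  simp [card_cyclicIntervals_zero]

theorem card_weaklySeparatedPairs_sdiff_eq_of_pos (G : Finset ℕ) {k j : ℕ} (hj : 0 < j)
    (hjk : j ≤ k) :
    #((weaklySeparatedPairs G k).filter fun p => #(p.1 \ p.2) = j) =
      2 * j * ((#G).choose (2 * j) * (#G - 2 * j).choose (k - j)) := by
  rw [card_weaklySeparatedPairs_sdiff_eq G hjk,
    sum_congr rfl (g := fun _ => (#G - 2 * j).choose (k - j) * (2 * j)), sum_const,
    card_powersetCard, smul_eq_mul]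
  · ring
  · intro S hS
    rw [mem_powersetCard] at hS
    rw [card_powersetCard, card_sdiff_of_subset hS.1, hS.2, card_cyclicIntervals hj (by omega),
      hS.2]

theorem card_weaklySeparatedPairs (G : Finset ℕ) (k : ℕ) :
    #(weaklySeparatedPairs G k) = (#G).choose k +
      ∑ j ∈ Icc 1 k, 2 * j * ((#G).choose (2 * j) * (#G - 2 * j).choose (k - j)) := by
  rw [card_eq_sum_card_fiberwise (f := fun p => #(p.1 \ p.2)) (t := insert 0 (Icc 1 k)),
    sum_insert (by simp), card_weaklySeparatedPairs_sdiff_eq_zero]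
  · refine congrArg _ (sum_congr rfl fun j hj => ?_)
    rw [mem_Icc] at hj
    exact card_weaklySeparatedPairs_sdiff_eq_of_pos G hj.1 hj.2
  · intro p hp
    rw [mem_coe, mem_weaklySeparatedPairs] at hp
    have := card_le_card (sdiff_subset (s := p.1) (t := p.2))
    simp only [coe_insert, coe_Icc, Set.mem_insert_iff, Set.mem_Icc]
    omega

theorem card_weaklySeparatedPairs_diag (G : Finset ℕ) (k : ℕ) :
    #((weaklySeparatedPairs G k).filter fun p => p.1 = p.2) = (#G).choose k := by
  rw [← card_powersetCard, ← diag_card (powersetCard k G)]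
  refine congrArg card ?_
  ext ⟨I, J⟩
  simp only [mem_filter, mem_weaklySeparatedPairs, mem_diag, mem_powersetCard]
  constructor
  · rintro ⟨⟨⟨hI, -⟩, -⟩, h⟩
    exact ⟨hI, h⟩
  · rintro ⟨hI, rfl⟩
    exact ⟨⟨⟨hI, hI⟩, WeaklySeparated.refl I⟩, rfl⟩

theorem choose_mul_choose_eq_div {n k j : ℕ} (h : k + j ≤ n) (hjk : j ≤ k) :
    n.choose (2 * j) * (n - 2 * j).choose (k - j) =
      n.factorial / ((k - j).factorial * (2 * j).factorial * (n - k - j).factorial) := by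
  have e1 := Nat.choose_mul_factorial_mul_factorial (n := n) (k := 2 * j) (by omega)
  have e2 := Nat.choose_mul_factorial_mul_factorial (n := n - 2 * j) (k := k - j) (by omega)
  rw [show n - 2 * j - (k - j) = n - k - j by omega] at e2
  refine (Nat.div_eq_of_eq_mul_left (by positivity) ?_).symm
  rw [← e1, ← e2]
  ring

theorem count_weakly_separated_pairs_general
    (k n : ℕ) (hn : 2 * k ≤ n) :
    (@Finset.filter (Sym2 (Finset ℕ))
        (fun p => ∃ I J : Finset ℕ, p = s(I, J) ∧ WeaklySeparated I J)
        (Classical.decPred _)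
        (((Finset.Icc 1 n).powersetCard k).sym2)).card
      = Nat.choose n k +
        ∑ j ∈ Finset.Icc 1 k,
          j * (n.factorial /
            ((k - j).factorial * (2 * j).factorial * (n - k - j).factorial)) := by
  classical
  have hG : #(Icc 1 n) = n := by simp
  have h := two_mul_card_image_sym2 (t := weaklySeparatedPairs (Icc 1 n) k) fun p hp => by
    rw [mem_weaklySeparatedPairs] at hp ⊢
    exact ⟨hp.1.symm, hp.2.symm⟩
  rw [card_weaklySeparatedPairs, card_weaklySeparatedPairs_diag, hG, weaklySeparatedPairs,
    ← filter_sym2_eq_image] at h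
  have hterms : ∀ j ∈ Icc 1 k, 2 * j * (n.choose (2 * j) * (n - 2 * j).choose (k - j)) =
      2 * (j * (n.factorial / ((k - j).factorial * (2 * j).factorial * (n - k - j).factorial))) :=
    fun j hj => by
      rw [mem_Icc] at hj
      rw [choose_mul_choose_eq_div (by omega) hj.2, mul_assoc]
  rw [sum_congr rfl hterms, ← mul_sum] at h
  omega

/-- The number of unordered weakly separated pairs of `k`-subsets of `[n]` (allowing equal
pairs) equals `b_{k,n}`. -/
theorem count_weakly_separated_pairs
    (k n : ℕ) (hk : 1 ≤ k) (hn : 2 * k ≤ n) :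
    (@Finset.filter (Sym2 (Finset ℕ))
        (fun p => ∃ I J : Finset ℕ, p = s(I, J) ∧ WeaklySeparated I J)
        (Classical.decPred _)
        (((Finset.Icc 1 n).powersetCard k).sym2)).card
      = Nat.choose n k +
        ∑ j ∈ Finset.Icc 1 k,
          j * (n.factorial /
            ((k - j).factorial * (2 * j).factorial * (n - k - j).factorial)) :=
  count_weakly_separated_pairs_general k n hn
end
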